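/- arXiv:1705.02294 — 3 statements merged into one kernel-verified Lean document; each statement's English description precedes it below -/
import Mathlib

section
/- Let τ be a permutation of {1,…,n} that moves exactly k points (i.e., |{i : τ(i) ≠ i}| = k). Let E_τ = { {u,v} : u ≠ v, {τ(u), τ(v)} ≠ {u,v} } be the set of unordered pairs not preserved by τ. Then |E_τ| = (k choose 2) − T_τ + (n−k)k, where T_τ is the number of unordered pairs {u,v} with u = τ(v) and v = τ(u), u ≠ v. Since T_τ ≤ k/2, it follows that |E_τ| ≥ k(n − 1 − k/2). -/
/-!
Split the pairs `a < b` into three classes: pairs not preserved by `τ`, pairs of two fixed points,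
and pairs swapped by `τ`. There are `C(n,2)` pairs in all and `C(n-k,2)` pairs of fixed points, and
`C(n,2) - C(n-k,2) = C(k,2) + (n-k)k`; this gives the identity. A swapped pair `a < b` consists of
a moved point with `a < τ a` and a moved point with `τ b < b`, and distinct swapped pairs use
distinct points, so `2 T_τ ≤ k`, which gives the bound.
-/

open Finset

theorem Nat.add_choose_two (m n : ℕ) : (m + n).choose 2 = m.choose 2 + m * n + n.choose 2 := by
  apply Nat.cast_injective (R := ℚ)
  push_cast [Nat.cast_choose_two]
  ring

theorem Finset.pair_eq_pair_iff {α : Type*} [DecidableEq α] {a b c d : α} :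
    ({a, b} : Finset α) = {c, d} ↔ a = c ∧ b = d ∨ a = d ∧ b = c := by
  rw [← coe_inj, coe_pair, coe_pair, Set.pair_eq_pair_iff]

namespace Equiv.Perm

variable {α : Type*} [Fintype α] [LinearOrder α] (τ : Equiv.Perm α)

def movedPairs : Finset (α × α) :=
  univ.filter fun p => p.1 < p.2 ∧ ({τ p.1, τ p.2} : Finset α) ≠ {p.1, p.2}

def fixedPairs : Finset (α × α) :=
  univ.filter fun p => p.1 < p.2 ∧ τ p.1 = p.1 ∧ τ p.2 = p.2

def swappedPairs : Finset (α × α) :=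
  univ.filter fun p => p.1 < p.2 ∧ τ p.1 = p.2 ∧ τ p.2 = p.1

theorem card_fixedPairs : #τ.fixedPairs = (Fintype.card α - #τ.support).choose 2 := by
  have : τ.fixedPairs = (τ.supportᶜ ×ˢ τ.supportᶜ).filter fun p => p.1 < p.2 := by
    ext p
    simp only [fixedPairs, mem_filter, mem_univ, true_and, mem_product, mem_compl, mem_support,
      not_not]
    tauto
  rw [this, card_product_filter_lt, card_compl]

theorem card_movedPairs_add_fixedPairs_add_swappedPairs :
    #τ.movedPairs + #τ.fixedPairs + #τ.swappedPairs = (Fintype.card α).choose 2 := by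
  have hfs : _root_.Disjoint τ.fixedPairs τ.swappedPairs := by
    simp only [fixedPairs, swappedPairs, disjoint_filter]
    grind
  have hm : _root_.Disjoint τ.movedPairs (τ.fixedPairs ∪ τ.swappedPairs) := by
    simp only [movedPairs, fixedPairs, swappedPairs, disjoint_union_right, disjoint_filter]
    grind [pair_comm]
  have hunion : τ.movedPairs ∪ (τ.fixedPairs ∪ τ.swappedPairs) =
      (univ ×ˢ univ).filter fun p : α × α => p.1 < p.2 := by
    ext p
    simp only [movedPairs, fixedPairs, swappedPairs, mem_union, mem_filter, mem_univ, true_and,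
      mem_product, ne_eq, pair_eq_pair_iff]
    tauto
  rw [add_assoc, ← card_union_of_disjoint hfs, ← card_union_of_disjoint hm, hunion,
    card_product_filter_lt, card_univ]

theorem two_mul_card_swappedPairs_le : 2 * #τ.swappedPairs ≤ #τ.support := by
  have hfst : #(τ.swappedPairs.image Prod.fst) = #τ.swappedPairs := by
    refine card_image_of_injOn fun p hp q hq h => ?_
    simp only [swappedPairs, mem_coe, mem_filter, mem_univ, true_and] at hp hq
    grind
  have hsnd : #(τ.swappedPairs.image Prod.snd) = #τ.swappedPairs := by
    refine card_image_of_injOn fun p hp q hq h => ?_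
    simp only [swappedPairs, mem_coe, mem_filter, mem_univ, true_and] at hp hq
    grind
  have hdisj :
      _root_.Disjoint (τ.swappedPairs.image Prod.fst) (τ.swappedPairs.image Prod.snd) := by
    simp only [swappedPairs, disjoint_left, mem_image, mem_filter, mem_univ, true_and]
    grind
  have hsub : τ.swappedPairs.image Prod.fst ∪ τ.swappedPairs.image Prod.snd ⊆ τ.support := by
    simp only [swappedPairs, subset_iff, mem_union, mem_image, mem_filter, mem_univ, true_and,
      mem_support]
    grind
  calc 2 * #τ.swappedPairs
      = #(τ.swappedPairs.image Prod.fst ∪ τ.swappedPairs.image Prod.snd) := by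
        rw [card_union_of_disjoint hdisj, hfst, hsnd, two_mul]
    _ ≤ #τ.support := card_le_card hsub

theorem card_movedPairs :
    (#τ.movedPairs : ℤ) = ((#τ.support).choose 2 : ℤ) - #τ.swappedPairs +
      ((Fintype.card α : ℤ) - #τ.support) * #τ.support := by
  have hk : #τ.support ≤ Fintype.card α := card_le_univ _
  have hsplit := Nat.add_choose_two (Fintype.card α - #τ.support) #τ.support
  rw [Nat.sub_add_cancel hk] at hsplit
  have hpart := τ.card_movedPairs_add_fixedPairs_add_swappedPairs
  rw [card_fixedPairs, hsplit] at hpart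
  zify [hk] at hpart
  linarith

theorem card_support_mul_le_card_movedPairs :
    (#τ.support : ℝ) * (Fintype.card α - 1 - #τ.support / 2) ≤ #τ.movedPairs := by
  have hcard : (#τ.movedPairs : ℝ) = ((#τ.support).choose 2 : ℝ) - #τ.swappedPairs +
      ((Fintype.card α : ℝ) - #τ.support) * #τ.support := by
    exact_mod_cast τ.card_movedPairs
  have hswap : 2 * (#τ.swappedPairs : ℝ) ≤ #τ.support := by
    exact_mod_cast τ.two_mul_card_swappedPairs_le
  rw [hcard, Nat.cast_choose_two]
  linarith

end Equiv.Perm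

/-- for a permutation `τ` of `[n]` moving exactly `k` points, the number of
unordered pairs not preserved by `τ` equals `C(k,2) − T_τ + (n−k)k` where `T_τ` is the
number of transposition pairs, and is at least `k(n − 1 − k/2)`. -/
theorem stmt_4 {n : ℕ} (τ : Equiv.Perm (Fin n)) (k : ℕ) (hk : τ.support.card = k) :
    ((Finset.univ.filter fun p : Fin n × Fin n =>
        p.1 < p.2 ∧ ({τ p.1, τ p.2} : Finset (Fin n)) ≠ {p.1, p.2}).card : ℤ) =
      (k.choose 2 : ℤ) -
        ((Finset.univ.filter fun p : Fin n × Fin n =>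
            p.1 < p.2 ∧ τ p.1 = p.2 ∧ τ p.2 = p.1).card : ℤ) +
        ((n : ℤ) - (k : ℤ)) * (k : ℤ) ∧
    (((Finset.univ.filter fun p : Fin n × Fin n =>
        p.1 < p.2 ∧ ({τ p.1, τ p.2} : Finset (Fin n)) ≠ {p.1, p.2}).card : ℝ)) ≥
      (k : ℝ) * ((n : ℝ) - 1 - (k : ℝ) / 2) := by
  subst hk
  have hcard := τ.card_movedPairs
  have hbound := τ.card_support_mul_le_card_movedPairs
  rw [Fintype.card_fin] at hcard hbound
  exact ⟨hcard, hbound⟩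
end

section
/- Let X, Y ∈ ℝ^{n×n}, δ > 0, and τ ≥ (1+δ)‖X − Y‖ (operator norm). Let X = ∑ᵢ σᵢ(X) uᵢ vᵢᵀ be a singular value decomposition of X and let X̆ = ∑_{i : σᵢ(X) > τ} σᵢ(X) uᵢ vᵢᵀ be the result of thresholding singular values at τ. Then ‖X̆ − Y‖_F² ≤ 16·min_{0 ≤ r ≤ n} ( τ²·r + ((1+δ)/δ)²·∑_{i ≥ r+1} σᵢ(Y)² ), where σ₁(Y) ≥ ⋯ ≥ σₙ(Y) are the singular values of Y. -/
/-!
Put `ε = τ/(1+δ)`, so that `‖X - Y‖ ≤ ε`, and let `S = {i : σᵢ(X) > τ}`. Weyl's inequality gives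
`σᵢ(X) ≤ σᵢ(Y) + ε`, and since `X - X̆` only carries singular values `≤ τ`,
`‖X̆ - Y‖ ≤ τ + ε ≤ 2τ`. Let `Yᵣ` be the top-`r` part of the SVD of `Y` and `W` the span of the
right singular vectors used by `X̆` and `Yᵣ`, so `dim W ≤ |S| + r` and the rows of `X̆ - Yᵣ` lie
in `W`. Projecting the rows of `X̆ - Y` onto `W` costs at most `dim W · (2τ)²`; their components
orthogonal to `W` are those of `Yᵣ - Y`, of total square norm `∑_{i > r} σᵢ(Y)²`. Finally, each
`i > r` in `S` has `σᵢ(Y) ≥ τ - ε = τδ/(1+δ)`, whence `τ² |S| ≤ τ² r + ((1+δ)/δ)² ∑_{i > r} σᵢ(Y)²`.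
-/

open Matrix Finset
open scoped RealInnerProductSpace
open WithLp (toLp)
open Module

section InnerProduct

variable {ι E F : Type*} [NormedAddCommGroup E] [InnerProductSpace ℝ E]
  [NormedAddCommGroup F] [InnerProductSpace ℝ F]

theorem Orthonormal.norm_sum_smul_sq {u : ι → F} (hu : Orthonormal ℝ u) (s : Finset ι)
    (c : ι → ℝ) : ‖∑ i ∈ s, c i • u i‖ ^ 2 = ∑ i ∈ s, c i ^ 2 := by
  rw [← real_inner_self_eq_norm_sq, hu.inner_sum]
  simp [sq]

theorem Orthonormal.norm_sum_smul_inner_le {u : ι → F} {v : ι → E} (hu : Orthonormal ℝ u)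
    (hv : Orthonormal ℝ v) {s : Finset ι} {σ : ι → ℝ} {C : ℝ} (hC : 0 ≤ C)
    (hσ : ∀ i ∈ s, |σ i| ≤ C) (w : E) :
    ‖∑ i ∈ s, (σ i * ⟪v i, w⟫) • u i‖ ≤ C * ‖w‖ := by
  refine le_of_pow_le_pow_left₀ two_ne_zero (by positivity) ?_
  rw [hu.norm_sum_smul_sq, mul_pow]
  calc ∑ i ∈ s, (σ i * ⟪v i, w⟫) ^ 2 ≤ ∑ i ∈ s, C ^ 2 * ⟪v i, w⟫ ^ 2 := by
        gcongr with i hi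
        rw [mul_pow]
        have := abs_le.mp (hσ i hi)
        exact mul_le_mul_of_nonneg_right (sq_le_sq' this.1 this.2) (sq_nonneg _)
    _ ≤ C ^ 2 * ‖w‖ ^ 2 := by
        rw [← mul_sum]
        gcongr
        simpa using hv.sum_inner_products_le (s := s) w

theorem Orthonormal.mul_norm_le_norm_sum_smul_inner [Fintype ι] {u : ι → F} {v : ι → E}
    (hu : Orthonormal ℝ u) (hv : Orthonormal ℝ v) {s : Finset ι} {σ : ι → ℝ} {C : ℝ}
    (hσ : ∀ i ∈ s, C ≤ σ i) (a : ι → ℝ) :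
    C * ‖∑ j ∈ s, a j • v j‖ ≤ ‖∑ i, (σ i * ⟪v i, ∑ j ∈ s, a j • v j⟫) • u i‖ := by
  classical
  rcases lt_or_ge C 0 with hC | hC
  · exact (mul_nonpos_of_nonpos_of_nonneg hC.le (norm_nonneg _)).trans (norm_nonneg _)
  have hinner : ∀ i, ⟪v i, ∑ j ∈ s, a j • v j⟫ = if i ∈ s then a i else 0 := fun i ↦ by
    simp [inner_sum, real_inner_smul_right, orthonormal_iff_ite.mp hv]
  have hsum : ∑ i, (σ i * ⟪v i, ∑ j ∈ s, a j • v j⟫) • u i = ∑ i ∈ s, (σ i * a i) • u i := by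
    simp_rw [hinner, mul_ite, mul_zero, ite_smul, zero_smul]
    rw [sum_ite_mem, univ_inter]
  refine le_of_pow_le_pow_left₀ two_ne_zero (norm_nonneg _) ?_
  rw [hsum, mul_pow, hu.norm_sum_smul_sq, hv.norm_sum_smul_sq, mul_sum]
  gcongr with i hi
  rw [mul_pow]
  gcongr
  exact hσ i hi

theorem OrthonormalBasis.norm_starProjection_sq [Fintype ι] {W : Submodule ℝ E}
    [W.HasOrthogonalProjection] (b : OrthonormalBasis ι ℝ W) (x : E) :
    ‖W.starProjection x‖ ^ 2 = ∑ k, ⟪(b k : E), x⟫ ^ 2 := by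
  rw [Submodule.starProjection_apply, Submodule.norm_coe, ← b.sum_sq_inner_right]
  simp

theorem Submodule.exists_mem_orthogonal_ne_zero_of_finrank_lt [FiniteDimensional ℝ E]
    {U V : Submodule ℝ E} (h : finrank ℝ V < finrank ℝ U) : ∃ w ∈ U, w ∈ Vᗮ ∧ w ≠ 0 := by
  have hdim := Submodule.finrank_sup_add_finrank_inf_eq U Vᗮ
  have hsup := Submodule.finrank_le (U ⊔ Vᗮ)
  have hV := V.finrank_add_finrank_orthogonal
  obtain ⟨⟨w, hwU, hwV⟩, hw⟩ :=
    Module.finrank_pos_iff_exists_ne_zero.mp (show 0 < finrank ℝ ↥(U ⊓ Vᗮ) by omega)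
  exact ⟨w, hwU, hwV, fun h ↦ hw (by simp [h])⟩

theorem le_add_of_finrank_lt {G : Type*} [NormedAddCommGroup G] [FiniteDimensional ℝ E]
    {A B : E → G} {U V : Submodule ℝ E} (hUV : finrank ℝ V < finrank ℝ U) {a b ε : ℝ}
    (hA : ∀ w ∈ U, a * ‖w‖ ≤ ‖A w‖) (hB : ∀ w ∈ Vᗮ, ‖B w‖ ≤ b * ‖w‖)
    (hAB : ∀ w, ‖A w - B w‖ ≤ ε * ‖w‖) : a ≤ b + ε := by
  obtain ⟨w, hwU, hwV, hw⟩ := Submodule.exists_mem_orthogonal_ne_zero_of_finrank_lt hUV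
  refine le_of_mul_le_mul_right ?_ (norm_pos_iff.mpr hw)
  calc a * ‖w‖ ≤ ‖A w‖ := hA w hwU
    _ ≤ ‖B w‖ + ‖A w - B w‖ := norm_le_insert' _ _
    _ ≤ (b + ε) * ‖w‖ := by linarith [hB w hwV, hAB w]

theorem finrank_span_image_finset_le {K V : Type*} [DivisionRing K] [AddCommGroup V]
    [Module K V] (s : Finset ι) (f : ι → V) :
    finrank K (Submodule.span K (f '' s)) ≤ #s := by
  classical
  refine (finrank_span_le_card _).trans ?_
  simpa [Set.toFinset_image] using card_image_le

end InnerProduct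

section EuclideanCoordinates

variable {ι m n : Type*} [Fintype m] [Fintype n]

theorem EuclideanSpace.norm_toLp_sq (f : n → ℝ) :
    ‖(toLp 2 f : EuclideanSpace ℝ n)‖ ^ 2 = ∑ i, f i ^ 2 := by
  simp [EuclideanSpace.real_norm_sq_eq]

theorem orthonormal_toLp_iff [DecidableEq ι] (u : ι → n → ℝ) :
    Orthonormal ℝ (fun i ↦ (toLp 2 (u i) : EuclideanSpace ℝ n)) ↔
      ∀ i j, ∑ x, u i x * u j x = if i = j then 1 else 0 := by
  refine orthonormal_iff_ite.trans (forall₂_congr fun i j ↦ ?_)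
  rw [EuclideanSpace.inner_toLp_toLp, star_trivial, dotProduct_comm]
  rfl

theorem forall_norm_toEuclideanLin_le_iff [DecidableEq n] (M : Matrix m n ℝ) (C : ℝ) :
    (∀ w, ‖toEuclideanLin M w‖ ≤ C * ‖w‖) ↔
      ∀ w : n → ℝ, √(∑ i, (M *ᵥ w) i ^ 2) ≤ C * √(∑ i, w i ^ 2) := by
  simp only [EuclideanSpace.norm_eq, Real.norm_eq_abs, sq_abs, toLpLin_apply]
  exact ⟨fun h w ↦ h (toLp 2 w), fun h w ↦ h w.ofLp⟩

theorem sum_sq_apply_eq_sum_norm_sq (M : Matrix m n ℝ) :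
    ∑ a, ∑ b, M a b ^ 2 = ∑ a, ‖(toLp 2 (M a) : EuclideanSpace ℝ n)‖ ^ 2 := by
  simp [EuclideanSpace.norm_toLp_sq]

theorem sum_inner_toLp_row_sq [DecidableEq n] (M : Matrix m n ℝ) (w : EuclideanSpace ℝ n) :
    ∑ a, ⟪w, toLp 2 (M a)⟫ ^ 2 = ‖toEuclideanLin M w‖ ^ 2 := by
  simp [EuclideanSpace.real_norm_sq_eq, EuclideanSpace.inner_eq_star_dotProduct, mulVec,
    dotProduct_comm]

/-- The `Wᗮ`-components of the rows of `A - Y` are, up to sign, those of the rows of `Y - B`. -/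
theorem sum_sq_sub_apply_le_finrank_mul_add [DecidableEq n] {A B Y : Matrix m n ℝ}
    (W : Submodule ℝ (EuclideanSpace ℝ n)) (hW : ∀ a, toLp 2 ((A - B) a) ∈ W) {C : ℝ}
    (hC : ∀ w, ‖toEuclideanLin (A - Y) w‖ ≤ C * ‖w‖) :
    ∑ a, ∑ b, (A - Y) a b ^ 2 ≤ finrank ℝ W * C ^ 2 + ∑ a, ∑ b, (Y - B) a b ^ 2 := by
  set e := stdOrthonormalBasis ℝ W
  have hrow : ∀ a, ‖(toLp 2 ((A - Y) a) : EuclideanSpace ℝ n)‖ ^ 2 ≤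
      ∑ k, ⟪(e k : EuclideanSpace ℝ n), toLp 2 ((A - Y) a)⟫ ^ 2 +
        ‖(toLp 2 ((Y - B) a) : EuclideanSpace ℝ n)‖ ^ 2 := by
    intro a
    rw [W.norm_sq_eq_add_norm_sq_starProjection, e.norm_starProjection_sq]
    gcongr
    have hsplit : (toLp 2 ((A - Y) a) : EuclideanSpace ℝ n) =
        toLp 2 ((A - B) a) - toLp 2 ((Y - B) a) := by
      ext; simp
    rw [hsplit, map_sub, Submodule.starProjection_orthogonal_apply_eq_zero (hW a), zero_sub,
      norm_neg]
    exact Wᗮ.norm_starProjection_apply_le _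
  have hcol : ∀ k, ∑ a, ⟪(e k : EuclideanSpace ℝ n), toLp 2 ((A - Y) a)⟫ ^ 2 ≤ C ^ 2 := by
    intro k
    have h := hC (e k)
    rw [Submodule.norm_coe, e.orthonormal.1 k, mul_one] at h
    rw [sum_inner_toLp_row_sq]
    exact pow_le_pow_left₀ (norm_nonneg _) h 2
  rw [sum_sq_apply_eq_sum_norm_sq, sum_sq_apply_eq_sum_norm_sq]
  calc _ ≤ ∑ a, (∑ k, ⟪(e k : EuclideanSpace ℝ n), toLp 2 ((A - Y) a)⟫ ^ 2 +
          ‖(toLp 2 ((Y - B) a) : EuclideanSpace ℝ n)‖ ^ 2) := sum_le_sum fun a _ ↦ hrow a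
    _ = _ := by rw [sum_add_distrib, sum_comm]
    _ ≤ _ := by
      gcongr
      simpa using sum_le_sum fun k (_ : k ∈ univ) ↦ hcol k

end EuclideanCoordinates

theorem card_filter_val_lt_le {k : ℕ} (r : ℕ) (s : Finset (Fin k)) :
    #(s.filter (fun i : Fin k ↦ (i : ℕ) < r)) ≤ r := by
  simpa using card_le_card_of_injOn Fin.val (t := range r)
    (fun i hi ↦ mem_range.mpr (mem_filter.mp hi).2) Fin.val_injective.injOn

/-- An index `i ≥ r` with `τ < σᵢ` has `σ'ᵢ ≥ τ - τ/(1+δ) = τδ/(1+δ)`, so it is paid for by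
`((1+δ)/δ)² σ'ᵢ²`. -/
theorem sq_mul_card_filter_lt_le {k : ℕ} {σ σ' : Fin k → ℝ} {τ δ : ℝ} (hδ : 0 < δ) (hτ : 0 ≤ τ)
    (h : ∀ i, σ i ≤ σ' i + τ / (1 + δ)) (r : ℕ) :
    τ ^ 2 * #(univ.filter (τ < σ ·)) ≤
      τ ^ 2 * r +
        ((1 + δ) / δ) ^ 2 * ∑ i ∈ univ.filter (fun i : Fin k ↦ r ≤ (i : ℕ)), σ' i ^ 2 := by
  set S := univ.filter (τ < σ ·)
  have hhead : (#(S.filter (fun i : Fin k ↦ (i : ℕ) < r)) : ℝ) ≤ r := by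
    exact_mod_cast card_filter_val_lt_le r S
  have hterm : ∀ i ∈ S.filter (fun i : Fin k ↦ ¬ (i : ℕ) < r),
      τ ^ 2 ≤ ((1 + δ) / δ) ^ 2 * σ' i ^ 2 := by
    intro i hi
    have hσ : τ < σ i := (mem_filter.mp (mem_filter.mp hi).1).2
    have hgap : τ * δ / (1 + δ) ≤ σ' i := by
      have hsub : τ - τ / (1 + δ) = τ * δ / (1 + δ) := by field_simp; ring
      linarith [h i]
    have hτσ' : τ ≤ (1 + δ) / δ * σ' i :=
      calc τ = (1 + δ) / δ * (τ * δ / (1 + δ)) := by field_simp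
        _ ≤ (1 + δ) / δ * σ' i := by gcongr
    rw [← mul_pow]
    exact pow_le_pow_left₀ hτ hτσ' 2
  have htail : τ ^ 2 * #(S.filter (fun i : Fin k ↦ ¬ (i : ℕ) < r)) ≤
      ((1 + δ) / δ) ^ 2 * ∑ i ∈ univ.filter (fun i : Fin k ↦ r ≤ (i : ℕ)), σ' i ^ 2 := by
    rw [mul_sum, mul_comm, ← nsmul_eq_mul, ← sum_const]
    refine (sum_le_sum hterm).trans (sum_le_sum_of_subset_of_nonneg (fun i hi ↦ ?_)
      fun _ _ _ ↦ by positivity)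
    simpa using (mem_filter.mp hi).2
  rw [← card_filter_add_card_filter_not (fun i : Fin k ↦ (i : ℕ) < r), Nat.cast_add]
  nlinarith

section SVD

variable {ι m n : Type*}

def svdSum (s : Finset ι) (σ : ι → ℝ) (u : ι → m → ℝ) (v : ι → n → ℝ) : Matrix m n ℝ :=
  ∑ i ∈ s, σ i • vecMulVec (u i) (v i)

theorem toLp_svdSum_apply (s : Finset ι) (σ : ι → ℝ) (u : ι → m → ℝ) (v : ι → n → ℝ) (a : m) :
    (toLp 2 (svdSum s σ u v a) : EuclideanSpace ℝ n) = ∑ i ∈ s, (σ i * u i a) • toLp 2 (v i) := by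
  ext b
  simp [svdSum, Matrix.sum_apply, vecMulVec_apply, mul_assoc]

theorem svdSum_filter_add_svdSum_filter_not (s : Finset ι) (p : ι → Prop) [DecidablePred p]
    (σ : ι → ℝ) (u : ι → m → ℝ) (v : ι → n → ℝ) :
    svdSum (s.filter p) σ u v + svdSum (s.filter (¬ p ·)) σ u v = svdSum s σ u v :=
  sum_filter_add_sum_filter_not s p _

theorem toLp_svdSum_apply_mem_span (s : Finset ι) (σ : ι → ℝ) (u : ι → m → ℝ)
    (v : ι → n → ℝ) (a : m) :
    (toLp 2 (svdSum s σ u v a) : EuclideanSpace ℝ n) ∈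
      Submodule.span ℝ ((fun i ↦ toLp 2 (v i)) '' s) := by
  rw [toLp_svdSum_apply]
  exact Submodule.sum_mem _ fun i hi ↦ Submodule.smul_mem _ _ (Submodule.subset_span ⟨i, hi, rfl⟩)

variable [Fintype n]

theorem toEuclideanLin_svdSum [DecidableEq n] (s : Finset ι) (σ : ι → ℝ) (u : ι → m → ℝ)
    (v : ι → n → ℝ) (w : EuclideanSpace ℝ n) :
    toEuclideanLin (svdSum s σ u v) w = ∑ i ∈ s, (σ i * ⟪toLp 2 (v i), w⟫) • toLp 2 (u i) := by
  ext a
  simp only [svdSum, toLpLin_apply, Matrix.sum_mulVec, smul_mulVec, vecMulVec_mulVec,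
    EuclideanSpace.inner_eq_star_dotProduct]
  simp [mul_assoc, dotProduct_comm (v _)]

variable [Fintype m]

theorem sum_sq_svdSum_apply {s : Finset ι} {σ : ι → ℝ} {u : ι → m → ℝ} {v : ι → n → ℝ}
    (hu : Orthonormal ℝ (fun i ↦ (toLp 2 (u i) : EuclideanSpace ℝ m)))
    (hv : Orthonormal ℝ (fun i ↦ (toLp 2 (v i) : EuclideanSpace ℝ n))) :
    ∑ a, ∑ b, svdSum s σ u v a b ^ 2 = ∑ i ∈ s, σ i ^ 2 := by
  rw [sum_sq_apply_eq_sum_norm_sq]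
  simp_rw [toLp_svdSum_apply, hv.norm_sum_smul_sq, mul_pow]
  rw [sum_comm]
  refine sum_congr rfl fun i _ ↦ ?_
  rw [← mul_sum, ← EuclideanSpace.norm_toLp_sq, hu.1 i, one_pow, mul_one]

theorem sum_sq_svdSum_sub_le [DecidableEq n] {s t : Finset ι} {σ σ' : ι → ℝ} {u u' : ι → m → ℝ}
    {v v' : ι → n → ℝ} {Y : Matrix m n ℝ} {C : ℝ}
    (hC : ∀ w, ‖toEuclideanLin (svdSum s σ u v - Y) w‖ ≤ C * ‖w‖) :
    ∑ a, ∑ b, (svdSum s σ u v - Y) a b ^ 2 ≤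
      (#s + #t) * C ^ 2 + ∑ a, ∑ b, (Y - svdSum t σ' u' v') a b ^ 2 := by
  set W := Submodule.span ℝ ((fun i ↦ toLp 2 (v i)) '' s) ⊔
    Submodule.span ℝ ((fun i ↦ toLp 2 (v' i)) '' t)
  have hW : ∀ a, toLp 2 ((svdSum s σ u v - svdSum t σ' u' v') a) ∈ W := fun a ↦
    Submodule.sub_mem _ (Submodule.mem_sup_left (toLp_svdSum_apply_mem_span _ _ _ _ a))
      (Submodule.mem_sup_right (toLp_svdSum_apply_mem_span _ _ _ _ a))
  have hdim : (finrank ℝ W : ℝ) ≤ #s + #t := by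
    exact_mod_cast (Submodule.finrank_add_le_finrank_add_finrank _ _).trans
      (add_le_add (finrank_span_image_finset_le _ _) (finrank_span_image_finset_le _ _))
  refine (sum_sq_sub_apply_le_finrank_mul_add W hW hC).trans ?_
  gcongr

structure IsSVD [Fintype ι] [Preorder ι] (A : Matrix m n ℝ) (σ : ι → ℝ) (u : ι → m → ℝ)
    (v : ι → n → ℝ) : Prop where
  nonneg : ∀ i, 0 ≤ σ i
  antitone : Antitone σ
  orthonormal_left : Orthonormal ℝ (fun i ↦ (toLp 2 (u i) : EuclideanSpace ℝ m))
  orthonormal_right : Orthonormal ℝ (fun i ↦ (toLp 2 (v i) : EuclideanSpace ℝ n))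
  eq_svdSum : A = svdSum univ σ u v

namespace IsSVD

variable [Fintype ι] [DecidableEq n] {A B : Matrix m n ℝ} {σ σ' : ι → ℝ} {u u' : ι → m → ℝ}
  {v v' : ι → n → ℝ}

/-- Weyl's inequality for singular values. -/
theorem le_add_of_norm_sub_le [LinearOrder ι] (hA : IsSVD A σ u v) (hB : IsSVD B σ' u' v')
    {ε : ℝ} (hAB : ∀ w, ‖toEuclideanLin (A - B) w‖ ≤ ε * ‖w‖) (i : ι) : σ i ≤ σ' i + ε := by
  classical
  set s := univ.filter (· ≤ i)
  set t := univ.filter (· < i)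
  have hv := hA.orthonormal_right
  have hv' := hB.orthonormal_right
  refine le_add_of_finrank_lt (A := toEuclideanLin A) (B := toEuclideanLin B)
    (U := Submodule.span ℝ ((fun j ↦ toLp 2 (v j)) '' s))
    (V := Submodule.span ℝ ((fun j ↦ toLp 2 (v' j)) '' t)) ?_ ?_ ?_ (by simpa using hAB)
  · calc finrank ℝ (Submodule.span ℝ ((fun j ↦ toLp 2 (v' j)) '' t)) ≤ #t :=
          finrank_span_image_finset_le _ _
      _ < #s := card_lt_card <| (ssubset_iff_of_subset fun j hj ↦ by
            simp only [t, s, mem_filter] at hj ⊢; exact ⟨hj.1, hj.2.le⟩).mpr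
              ⟨i, by simp [s], by simp [t]⟩
      _ = _ := by
          rw [finrank_span_set_eq_card ((hv.linearIndependent.linearIndepOn _).id_image)]
          simp [Set.toFinset_image, card_image_of_injective _ hv.linearIndependent.injective]
  · intro w hw
    obtain ⟨a, ha, rfl⟩ := (Finsupp.mem_span_image_iff_linearCombination ℝ).mp hw
    rw [Finsupp.linearCombination_apply_of_mem_supported ℝ ha, hA.eq_svdSum,
      toEuclideanLin_svdSum]
    exact hA.orthonormal_left.mul_norm_le_norm_sum_smul_inner hv
      (fun j hj ↦ hA.antitone (mem_filter.mp hj).2) a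
  · intro w hw
    have hzero : ∀ j ∈ t, ⟪toLp 2 (v' j), w⟫ = 0 := fun j hj ↦
      (Submodule.mem_orthogonal _ _).mp hw _ (Submodule.subset_span ⟨j, hj, rfl⟩)
    rw [hB.eq_svdSum, toEuclideanLin_svdSum, ← sum_filter_of_ne (p := (i ≤ ·)) fun j _ hj ↦
      not_lt.mp fun hji ↦ hj (by rw [hzero j (by simpa [t] using hji), mul_zero, zero_smul])]
    refine hB.orthonormal_left.norm_sum_smul_inner_le hv' (hB.nonneg i) (fun j hj ↦ ?_) w
    rw [abs_of_nonneg (hB.nonneg j)]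
    exact hB.antitone (mem_filter.mp hj).2

theorem norm_toEuclideanLin_threshold_sub_le [Preorder ι] (hA : IsSVD A σ u v) {τ ε : ℝ}
    (hτ : 0 ≤ τ) (hAB : ∀ w, ‖toEuclideanLin (A - B) w‖ ≤ ε * ‖w‖) (w : EuclideanSpace ℝ n) :
    ‖toEuclideanLin (svdSum (univ.filter (τ < σ ·)) σ u v - B) w‖ ≤ (τ + ε) * ‖w‖ := by
  have hsplit : svdSum (univ.filter (τ < σ ·)) σ u v - B =
      (A - B) - svdSum (univ.filter (¬ τ < σ ·)) σ u v := by
    rw [hA.eq_svdSum, ← svdSum_filter_add_svdSum_filter_not univ (τ < σ ·)]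
    abel
  have hsmall : ‖toEuclideanLin (svdSum (univ.filter (¬ τ < σ ·)) σ u v) w‖ ≤ τ * ‖w‖ := by
    rw [toEuclideanLin_svdSum]
    refine hA.orthonormal_left.norm_sum_smul_inner_le hA.orthonormal_right hτ (fun i hi ↦ ?_) w
    rw [abs_of_nonneg (hA.nonneg i)]
    exact not_lt.mp (mem_filter.mp hi).2
  rw [hsplit, map_sub, LinearMap.sub_apply]
  linarith [norm_sub_le (toEuclideanLin (A - B) w)
    (toEuclideanLin (svdSum (univ.filter (¬ τ < σ ·)) σ u v) w), hAB w]

end IsSVD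

end SVD

theorem IsSVD.sum_sq_threshold_sub_le {m n : Type*} [Fintype m] [Fintype n] [DecidableEq n]
    {k : ℕ} {X Y : Matrix m n ℝ} {σX σY : Fin k → ℝ} {u uY : Fin k → m → ℝ}
    {v vY : Fin k → n → ℝ} (hX : IsSVD X σX u v) (hY : IsSVD Y σY uY vY) {τ δ : ℝ}
    (hδ : 0 < δ) (hτ : 0 ≤ τ) (hXY : ∀ w, ‖toEuclideanLin (X - Y) w‖ ≤ τ / (1 + δ) * ‖w‖)
    (r : ℕ) :
    ∑ a, ∑ b, (svdSum (univ.filter (τ < σX ·)) σX u v - Y) a b ^ 2 ≤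
      16 * (τ ^ 2 * r + ((1 + δ) / δ) ^ 2 *
        ∑ i ∈ univ.filter (fun i : Fin k ↦ r ≤ (i : ℕ)), σY i ^ 2) := by
  set c := (1 + δ) / δ
  set head := univ.filter (fun i : Fin k ↦ (i : ℕ) < r)
  set tail := ∑ i ∈ univ.filter (fun i : Fin k ↦ r ≤ (i : ℕ)), σY i ^ 2
  have hε : τ / (1 + δ) ≤ τ := div_le_self hτ (by linarith)
  have hε0 : 0 ≤ τ / (1 + δ) := div_nonneg hτ (by linarith)
  have hc : 1 ≤ c ^ 2 := one_le_pow₀ ((one_le_div hδ).mpr (by linarith))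
  have htail : ∑ a, ∑ b, (Y - svdSum head σY uY vY) a b ^ 2 = tail := by
    have hrest : Y - svdSum head σY uY vY =
        svdSum (univ.filter (fun i : Fin k ↦ r ≤ (i : ℕ))) σY uY vY := by
      rw [sub_eq_iff_eq_add', hY.eq_svdSum,
        ← svdSum_filter_add_svdSum_filter_not univ (fun i : Fin k ↦ (i : ℕ) < r)]
      simp [head]
    rw [hrest, sum_sq_svdSum_apply hY.orthonormal_left hY.orthonormal_right]
  have hfrob := sum_sq_svdSum_sub_le (t := head) (σ' := σY) (u' := uY) (v' := vY)
    (hX.norm_toEuclideanLin_threshold_sub_le hτ hXY)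
  rw [htail] at hfrob
  have hcount := sq_mul_card_filter_lt_le hδ hτ (hX.le_add_of_norm_sub_le hY hXY) r
  have hhead : (#head : ℝ) ≤ r := by exact_mod_cast card_filter_val_lt_le r univ
  have htail0 : 0 ≤ tail := sum_nonneg fun _ _ ↦ sq_nonneg _
  calc _ ≤ _ := hfrob
    _ ≤ (#(univ.filter (τ < σX ·)) + #head) * (4 * τ ^ 2) + tail := by gcongr; nlinarith
    _ ≤ _ := by nlinarith [mul_le_mul_of_nonneg_left hhead (sq_nonneg τ),
        mul_le_mul_of_nonneg_right hc htail0]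

/-- USVT error bound, Lemma 1 of Xu 2017: if `τ ≥ (1+δ)‖X − Y‖` (operator
norm, expressed as a bound on all vectors in Euclidean norm), and `X̆` is obtained from a
singular value decomposition of `X` by keeping only singular values exceeding `τ`, then
`‖X̆ − Y‖_F² ≤ 16 min_{0 ≤ r ≤ n} (τ² r + ((1+δ)/δ)² ∑_{i ≥ r+1} σᵢ(Y)²)`. -/
theorem stmt_12 {n : ℕ} (X Y : Matrix (Fin n) (Fin n) ℝ) (δ τ : ℝ) (hδ : 0 < δ)
    -- SVD of X
    (σX : Fin n → ℝ) (u v : Fin n → Fin n → ℝ)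
    (hσX0 : ∀ i, 0 ≤ σX i) (hσXmono : Antitone σX)
    (hu : ∀ i j, ∑ x, u i x * u j x = if i = j then (1 : ℝ) else 0)
    (hv : ∀ i j, ∑ x, v i x * v j x = if i = j then (1 : ℝ) else 0)
    (hX : X = ∑ i, σX i • Matrix.vecMulVec (u i) (v i))
    -- SVD of Y (defining the singular values σY of Y)
    (σY : Fin n → ℝ) (uY vY : Fin n → Fin n → ℝ)
    (hσY0 : ∀ i, 0 ≤ σY i) (hσYmono : Antitone σY)
    (huY : ∀ i j, ∑ x, uY i x * uY j x = if i = j then (1 : ℝ) else 0)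
    (hvY : ∀ i j, ∑ x, vY i x * vY j x = if i = j then (1 : ℝ) else 0)
    (hY : Y = ∑ i, σY i • Matrix.vecMulVec (uY i) (vY i))
    -- τ ≥ (1+δ)·‖X − Y‖ (operator norm)
    (hτ : ∀ w : Fin n → ℝ,
      Real.sqrt (∑ i, ((X - Y).mulVec w) i ^ 2) ≤
        (τ / (1 + δ)) * Real.sqrt (∑ i, w i ^ 2)) :
    ∀ r : ℕ, r ≤ n →
      ∑ i, ∑ j,
          ((∑ i' ∈ Finset.univ.filter (fun i' : Fin n => τ < σX i'),
              σX i' • Matrix.vecMulVec (u i') (v i')) i j - Y i j) ^ 2 ≤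
        16 * (τ ^ 2 * (r : ℝ) +
          ((1 + δ) / δ) ^ 2 *
            ∑ i ∈ Finset.univ.filter (fun i : Fin n => r ≤ (i : ℕ)), σY i ^ 2) := by
  intro r _
  rcases Nat.eq_zero_or_pos n with rfl | hn
  · simp only [univ_eq_empty, sum_empty]
    positivity
  have hXY := (forall_norm_toEuclideanLin_le_iff (X - Y) (τ / (1 + δ))).mpr hτ
  have hτ0 : 0 ≤ τ := by
    have : Nonempty (Fin n) := ⟨⟨0, hn⟩⟩
    obtain ⟨w, hw⟩ := exists_ne (0 : EuclideanSpace ℝ (Fin n))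
    have hε := nonneg_of_mul_nonneg_left ((norm_nonneg _).trans (hXY w)) (norm_pos_iff.mpr hw)
    have := mul_nonneg hε (by linarith : 0 ≤ 1 + δ)
    rwa [div_mul_cancel₀ _ (by linarith)] at this
  exact IsSVD.sum_sq_threshold_sub_le
    ⟨hσX0, hσXmono, (orthonormal_toLp_iff u).mpr hu, (orthonormal_toLp_iff v).mpr hv, hX⟩
    ⟨hσY0, hσYmono, (orthonormal_toLp_iff uY).mpr huY, (orthonormal_toLp_iff vY).mpr hvY, hY⟩
    hδ hτ0 hXY r
end

section
/- Work in the correlated heterogeneous Erdős–Rényi model (A,B) ∼ CorrER(Q₁,Q₂,R) on 2n vertices with Q₁ having blocks (p, r; r, q), Q₂ having blocks (q, r; r, p), and R having blocks (ϱ₁, ϱ₂; ϱ₂, ϱ₁), where each block is n×n constant. Let P be a permutation matrix swapping block 1 and block 2 (so P Q₂ Pᵀ = Q₁, with corresponding permutation having no fixed pairs inside blocks). Then (1/2)·𝔼[tr(A P B Pᵀ) − tr(A B)] ≥ (n choose 2)·[(p−q)² − 2ϱ₁√(p(1−p)q(1−q))] − n²·ϱ₂·r(1−r) − n·r². -/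
/-! Writing `P` for the matrix of `σ`, `tr(A P B Pᵀ) = ∑_{u,v} A_{uv} B_{σu σv}`, so half the
expected difference of traces is half the sum over ordered pairs `u ≠ v` of
`𝔼[A_{uv} B_{σu σv}] - 𝔼[A_{uv} B_{uv}]`. As `σ` has no fixed points, the unordered pairs
`{u, v}` and `{σu, σv}` differ unless `σ` swaps `u` and `v`, in which case the term vanishes.
Otherwise independence and `Q₂(σu, σv) = Q₁(u, v)` give `𝔼[A_{uv} B_{σu σv}] = Q₁(u, v)²`, while
`𝔼[A_{uv} B_{uv}] = Q₁Q₂ + R √(Q₁(1-Q₁)Q₂(1-Q₂))`. Summing these block constants yields the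
bound, with `n r²` to spare. -/

open MeasureTheory Matrix Finset

/-- The 2×2-block constant matrix on `2n` vertices with diagonal blocks `a` (block 1)
and `c` (block 2) and off-diagonal blocks `b`. -/
def blockM (n : ℕ) (a b c : ℝ) : Matrix (Fin (2 * n)) (Fin (2 * n)) ℝ :=
  fun u w =>
    if (u : ℕ) < n then (if (w : ℕ) < n then a else b)
    else (if (w : ℕ) < n then b else c)

lemma Matrix.permMatrix_mul_mul_transpose_permMatrix {ι R : Type*} [Fintype ι] [DecidableEq ι]
    [NonAssocSemiring R] (σ : Equiv.Perm ι) (M : Matrix ι ι R) :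
    σ.permMatrix R * M * (σ.permMatrix R)ᵀ = M.submatrix σ σ := by
  rw [transpose_permMatrix, PEquiv.toMatrix_toPEquiv_mul, PEquiv.mul_toMatrix_toPEquiv]
  rfl

lemma pair_ne_pair_of_forall_ne {ι : Type*} [DecidableEq ι] {σ : Equiv.Perm ι}
    (hσ : ∀ u, σ u ≠ u) {u v : ι} (hswap : ¬(σ u = v ∧ σ v = u)) :
    ({u, v} : Finset ι) ≠ {σ u, σ v} := by
  intro h
  have hu : σ u ∈ ({u, v} : Finset ι) := by rw [h]; simp
  have hv : σ v ∈ ({u, v} : Finset ι) := by rw [h]; simp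
  simp only [mem_insert, mem_singleton] at hu hv
  grind

section CorrelatedPairs

variable {Ω ι : Type*} [MeasurableSpace Ω] [DecidableEq ι]

theorem integral_trace_permMatrix_conj_sub_trace [Fintype ι] (μ : Measure Ω)
    (A B : Ω → Matrix ι ι ℝ) (hB : ∀ ω, (B ω).IsSymm)
    (hInt : ∀ u v u' v', Integrable (fun ω => A ω u v * B ω u' v') μ)
    (σ : Equiv.Perm ι) :
    ∫ ω, (trace (A ω * σ.permMatrix ℝ * B ω * (σ.permMatrix ℝ)ᵀ) - trace (A ω * B ω)) ∂μ =
      ∑ u, ∑ v, ((∫ ω, A ω u v * B ω (σ u) (σ v) ∂μ) - ∫ ω, A ω u v * B ω u v ∂μ) := by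
  have htrace : ∀ ω, trace (A ω * σ.permMatrix ℝ * B ω * (σ.permMatrix ℝ)ᵀ) -
      trace (A ω * B ω) = ∑ u, ∑ v, (A ω u v * B ω (σ u) (σ v) - A ω u v * B ω u v) := by
    intro ω
    rw [mul_assoc, mul_assoc, ← mul_assoc (σ.permMatrix ℝ),
      permMatrix_mul_mul_transpose_permMatrix]
    simp only [trace, Matrix.diag, mul_apply, submatrix_apply, ← sum_sub_distrib]
    refine sum_congr rfl fun u _ => sum_congr rfl fun v _ => ?_
    rw [(hB ω).apply (σ u), (hB ω).apply u]
  have hInt' : ∀ u v, Integrable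
      (fun ω => A ω u v * B ω (σ u) (σ v) - A ω u v * B ω u v) μ :=
    fun u v => (hInt u v (σ u) (σ v)).sub (hInt u v u v)
  simp only [htrace]
  rw [integral_finsetSum _ fun u _ => integrable_finsetSum _ fun v _ => hInt' u v]
  refine sum_congr rfl fun u _ => ?_
  rw [integral_finsetSum _ fun v _ => hInt' u v]
  exact sum_congr rfl fun v _ => integral_sub (hInt u v (σ u) (σ v)) (hInt u v u v)

/-- When `Q₂ (σ u) (σ v) = Q₁ u v`, the first term is
`𝔼[A u v] 𝔼[B (σ u) (σ v)] - 𝔼[A u v] 𝔼[B u v]` for Bernoulli entries of means `Q₁`, `Q₂`,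
and the second is the covariance of `A u v` and `B u v` when their correlation is `R u v`. -/
noncomputable def corrPairBound (Q₁ Q₂ R : Matrix ι ι ℝ) : Matrix ι ι ℝ := fun u v =>
  Q₁ u v * (Q₁ u v - Q₂ u v) - R u v * √(Q₁ u v * (1 - Q₁ u v) * (Q₂ u v * (1 - Q₂ u v)))

theorem corrPairBound_le_integral_mul_sub_integral_mul (μ : Measure Ω)
    (A B : Ω → Matrix ι ι ℝ) (Q₁ Q₂ R : Matrix ι ι ℝ)
    (hB : ∀ ω, (B ω).IsSymm) (hQ₂ : Q₂.IsSymm) (hR : ∀ u v, 0 ≤ R u v)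
    (hcov : ∀ u v, u ≠ v → ∫ ω, A ω u v * B ω u v ∂μ =
      Q₁ u v * Q₂ u v + R u v * √(Q₁ u v * (1 - Q₁ u v) * (Q₂ u v * (1 - Q₂ u v))))
    (hindep : ∀ u v u' v', u ≠ v → u' ≠ v' → ({u, v} : Finset ι) ≠ {u', v'} →
      ∫ ω, A ω u v * B ω u' v' ∂μ = Q₁ u v * Q₂ u' v')
    (σ : Equiv.Perm ι) (hσ : ∀ u, σ u ≠ u) (hσQ : ∀ u v, Q₂ (σ u) (σ v) = Q₁ u v)
    {u v : ι} (huv : u ≠ v) :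
    corrPairBound Q₁ Q₂ R u v ≤
      (∫ ω, A ω u v * B ω (σ u) (σ v) ∂μ) - ∫ ω, A ω u v * B ω u v ∂μ := by
  unfold corrPairBound
  by_cases hswap : σ u = v ∧ σ v = u
  · have hQ : Q₁ u v = Q₂ u v := by rw [← hσQ, hswap.1, hswap.2, hQ₂.apply]
    have hAB : (fun ω => A ω u v * B ω (σ u) (σ v)) = fun ω => A ω u v * B ω u v := by
      ext ω; rw [hswap.1, hswap.2, (hB ω).apply]
    rw [hAB, hQ, sub_self, sub_self, mul_zero, zero_sub, neg_nonpos]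
    exact mul_nonneg (hR u v) (Real.sqrt_nonneg _)
  · have hσuv : σ u ≠ σ v := σ.injective.ne huv
    rw [hindep u v _ _ huv hσuv (pair_ne_pair_of_forall_ne hσ hswap), hcov u v huv, hσQ]
    linarith

end CorrelatedPairs

section Blocks

variable {n : ℕ}

lemma blockM_isSymm (a b c : ℝ) : (blockM n a b c).IsSymm := by
  ext u v
  simp only [transpose_apply, blockM]
  split_ifs <;> rfl

lemma blockM_nonneg {a b c : ℝ} (ha : 0 ≤ a) (hb : 0 ≤ b) (hc : 0 ≤ c) (u v : Fin (2 * n)) :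
    0 ≤ blockM n a b c u v := by
  simp only [blockM]
  split_ifs <;> assumption

lemma blockM_apply_perm {σ : Equiv.Perm (Fin (2 * n))}
    (hσ : ∀ u : Fin (2 * n), ((u : ℕ) < n) ↔ ¬((σ u : ℕ) < n)) (a b c : ℝ) (u v : Fin (2 * n)) :
    blockM n a b c (σ u) (σ v) = blockM n c b a u v := by
  have hu := hσ u
  have hv := hσ v
  simp only [blockM]
  split_ifs <;> tauto

lemma sum_ite_val_lt_two_mul (x y : ℝ) :
    ∑ v : Fin (2 * n), (if (v : ℕ) < n then x else y) = n * x + n * y := by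
  have hlt : #{v : Fin (2 * n) | (v : ℕ) < n} = n := by
    rw [Fin.card_filter_val_lt]; omega
  have hge : #{v : Fin (2 * n) | ¬(v : ℕ) < n} = n := by
    have := card_filter_add_card_filter_not (s := univ) (fun v : Fin (2 * n) => (v : ℕ) < n)
    rw [hlt, card_univ, Fintype.card_fin] at this
    omega
  rw [sum_ite, sum_const, sum_const, hlt, hge, nsmul_eq_mul, nsmul_eq_mul]

lemma sum_blockM_apply (a b c : ℝ) (u : Fin (2 * n)) :
    ∑ v, blockM n a b c u v = if (u : ℕ) < n then n * a + n * b else n * b + n * c := by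
  simp only [blockM]
  split_ifs <;> exact sum_ite_val_lt_two_mul _ _

lemma blockM_apply_self (a b c : ℝ) (u : Fin (2 * n)) :
    blockM n a b c u u = if (u : ℕ) < n then a else c := by
  simp only [blockM]
  split_ifs <;> rfl

lemma sum_sum_blockM_off_diagonal (a b c : ℝ) :
    ∑ u : Fin (2 * n), ∑ v, (if u = v then 0 else blockM n a b c u v) =
      n * (n - 1) * (a + c) + 2 * n ^ 2 * b := by
  have hrow : ∀ u, ∑ v, (if u = v then 0 else blockM n a b c u v) =
      ∑ v, blockM n a b c u v - blockM n a b c u u := by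
    intro u
    rw [← Finset.sum_ite_eq_of_mem univ u (fun v => blockM n a b c u v) (mem_univ u),
      ← sum_sub_distrib]
    exact sum_congr rfl fun v _ => by split_ifs <;> simp
  simp only [hrow, sum_blockM_apply, blockM_apply_self, sum_sub_distrib, sum_ite_val_lt_two_mul]
  ring

end Blocks

lemma corrPairBound_blockM {n : ℕ} (p q ϱ₁ ϱ₂ : ℝ) {r : ℝ} (hr : r ∈ Set.Icc (0 : ℝ) 1) :
    corrPairBound (blockM n p r q) (blockM n q r p) (blockM n ϱ₁ ϱ₂ ϱ₁) =
      blockM n (p * (p - q) - ϱ₁ * √(p * (1 - p) * q * (1 - q))) (-(ϱ₂ * (r * (1 - r))))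
        (q * (q - p) - ϱ₁ * √(p * (1 - p) * q * (1 - q))) := by
  have hr' : 0 ≤ r * (1 - r) := mul_nonneg hr.1 (sub_nonneg.2 hr.2)
  ext u v
  simp only [corrPairBound, blockM]
  split_ifs
  · rw [← mul_assoc]
  · rw [sub_self, mul_zero, zero_sub, Real.sqrt_mul_self hr']
  · rw [sub_self, mul_zero, zero_sub, Real.sqrt_mul_self hr']
  · rw [mul_comm (q * _), ← mul_assoc]

theorem stmt_16_general {Ω : Type*} [MeasurableSpace Ω] (μ : Measure Ω)
    {n : ℕ} (p q r ϱ1 ϱ2 : ℝ)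
    (hr : r ∈ Set.Icc (0 : ℝ) 1)
    (hϱ1 : ϱ1 ∈ Set.Icc (0 : ℝ) 1) (hϱ2 : ϱ2 ∈ Set.Icc (0 : ℝ) 1)
    (A B : Ω → Matrix (Fin (2 * n)) (Fin (2 * n)) ℝ)
    (hsymmB : ∀ ω, (B ω).IsSymm)
    (hhollowA : ∀ ω u, A ω u u = 0)
    -- same-pair correlation given by R
    (hcov : ∀ u v, u ≠ v →
      ∫ ω, A ω u v * B ω u v ∂μ =
        blockM n p r q u v * blockM n q r p u v +
          blockM n ϱ1 ϱ2 ϱ1 u v *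
            Real.sqrt (blockM n p r q u v * (1 - blockM n p r q u v) *
              (blockM n q r p u v * (1 - blockM n q r p u v))))
    -- independence across distinct unordered pairs
    (hindep : ∀ u v u' v', u ≠ v → u' ≠ v' →
      ({u, v} : Finset (Fin (2 * n))) ≠ {u', v'} →
      ∫ ω, A ω u v * B ω u' v' ∂μ = blockM n p r q u v * blockM n q r p u' v')
    (hInt : ∀ u v u' v', Integrable (fun ω => A ω u v * B ω u' v') μ)
    -- σ swaps block 1 and block 2
    (σ : Equiv.Perm (Fin (2 * n))) (hσ : ∀ u : Fin (2 * n), ((u : ℕ) < n) ↔ ¬((σ u : ℕ) < n)) :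
    (1 / 2 : ℝ) *
        ∫ ω, (Matrix.trace (A ω * σ.permMatrix ℝ * B ω * (σ.permMatrix ℝ)ᵀ) -
          Matrix.trace (A ω * B ω)) ∂μ ≥
      (n.choose 2 : ℝ) * ((p - q) ^ 2 - 2 * ϱ1 * Real.sqrt (p * (1 - p) * q * (1 - q))) -
        (n : ℝ) ^ 2 * ϱ2 * r * (1 - r) - (n : ℝ) * r ^ 2 := by
  have hfree : ∀ u, σ u ≠ u := fun u h => by have := hσ u; rw [h] at this; tauto
  have hpair : ∀ u v, (if u = v then 0 else
      corrPairBound (blockM n p r q) (blockM n q r p) (blockM n ϱ1 ϱ2 ϱ1) u v) ≤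
      (∫ ω, A ω u v * B ω (σ u) (σ v) ∂μ) - ∫ ω, A ω u v * B ω u v ∂μ := by
    intro u v
    split_ifs with huv
    · simp [huv, hhollowA]
    · exact corrPairBound_le_integral_mul_sub_integral_mul μ A B _ _ _ hsymmB (blockM_isSymm ..)
        (blockM_nonneg hϱ1.1 hϱ2.1 hϱ1.1) hcov hindep σ hfree (blockM_apply_perm hσ _ _ _) huv
  rw [ge_iff_le, integral_trace_permMatrix_conj_sub_trace μ A B hsymmB hInt σ]
  calc _ ≤ (1 / 2 : ℝ) * ∑ u, ∑ v, (if u = v then 0 else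
        corrPairBound (blockM n p r q) (blockM n q r p) (blockM n ϱ1 ϱ2 ϱ1) u v) := by
        rw [corrPairBound_blockM _ _ _ _ hr, sum_sum_blockM_off_diagonal, Nat.cast_choose_two]
        nlinarith [mul_nonneg (Nat.cast_nonneg (α := ℝ) n) (sq_nonneg r)]
    _ ≤ _ := by gcongr with u _ v _; exact hpair u v

/-- in the correlated heterogeneous SBM of Example 1 (`Q₁` with blocks
`(p,r;r,q)`, `Q₂` with blocks `(q,r;r,p)`, `R` with blocks `(ϱ₁,ϱ₂;ϱ₂,ϱ₁)`) and `P` a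
block-swapping permutation matrix,
`(1/2)𝔼[tr(APBPᵀ) − tr(AB)] ≥ C(n,2)[(p−q)² − 2ϱ₁√(p(1−p)q(1−q))] − n²ϱ₂r(1−r) − nr²`. -/
theorem stmt_16 {Ω : Type*} [MeasurableSpace Ω] (μ : Measure Ω) [IsProbabilityMeasure μ]
    {n : ℕ} (hn : 0 < n) (p q r ϱ1 ϱ2 : ℝ)
    (hp : p ∈ Set.Icc (0 : ℝ) 1) (hq : q ∈ Set.Icc (0 : ℝ) 1)
    (hr : r ∈ Set.Icc (0 : ℝ) 1)
    (hϱ1 : ϱ1 ∈ Set.Icc (0 : ℝ) 1) (hϱ2 : ϱ2 ∈ Set.Icc (0 : ℝ) 1)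
    (hqp : q < p)
    (A B : Ω → Matrix (Fin (2 * n)) (Fin (2 * n)) ℝ)
    (hmeasA : ∀ u v, Measurable fun ω => A ω u v)
    (hmeasB : ∀ u v, Measurable fun ω => B ω u v)
    (h01A : ∀ ω u v, A ω u v = 0 ∨ A ω u v = 1)
    (h01B : ∀ ω u v, B ω u v = 0 ∨ B ω u v = 1)
    (hsymmA : ∀ ω, (A ω).IsSymm) (hsymmB : ∀ ω, (B ω).IsSymm)
    (hhollowA : ∀ ω u, A ω u u = 0) (hhollowB : ∀ ω u, B ω u u = 0)
    (hmeanA : ∀ u v, u ≠ v → ∫ ω, A ω u v ∂μ = blockM n p r q u v)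
    (hmeanB : ∀ u v, u ≠ v → ∫ ω, B ω u v ∂μ = blockM n q r p u v)
    -- same-pair correlation given by R
    (hcov : ∀ u v, u ≠ v →
      ∫ ω, A ω u v * B ω u v ∂μ =
        blockM n p r q u v * blockM n q r p u v +
          blockM n ϱ1 ϱ2 ϱ1 u v *
            Real.sqrt (blockM n p r q u v * (1 - blockM n p r q u v) *
              (blockM n q r p u v * (1 - blockM n q r p u v))))
    -- independence across distinct unordered pairs
    (hindep : ∀ u v u' v', u ≠ v → u' ≠ v' →
      ({u, v} : Finset (Fin (2 * n))) ≠ {u', v'} →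
      ∫ ω, A ω u v * B ω u' v' ∂μ = blockM n p r q u v * blockM n q r p u' v')
    (hInt : ∀ u v u' v', Integrable (fun ω => A ω u v * B ω u' v') μ)
    -- σ swaps block 1 and block 2
    (σ : Equiv.Perm (Fin (2 * n))) (hσ : ∀ u : Fin (2 * n), ((u : ℕ) < n) ↔ ¬((σ u : ℕ) < n)) :
    (1 / 2 : ℝ) *
        ∫ ω, (Matrix.trace (A ω * σ.permMatrix ℝ * B ω * (σ.permMatrix ℝ)ᵀ) -
          Matrix.trace (A ω * B ω)) ∂μ ≥
      (n.choose 2 : ℝ) * ((p - q) ^ 2 - 2 * ϱ1 * Real.sqrt (p * (1 - p) * q * (1 - q))) -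
        (n : ℝ) ^ 2 * ϱ2 * r * (1 - r) - (n : ℝ) * r ^ 2 :=
  stmt_16_general μ p q r ϱ1 ϱ2 hr hϱ1 hϱ2 A B hsymmB hhollowA hcov hindep hInt σ hσ
end
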